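/- Let g ∈ ℕ and let ξ₋₁, ξ₀, …, ξ_g be trace-free 2×2 complex matrices with ξ₋₁ a complex multiple of E₁₂ = [[0,1],[0,0]], satisfying the reality condition ξ_d = −(conj ξ_{g−1−d})ᵀ for all d ∈ {−1, 0, …, g}; write ξ(λ) = Σ_{d=−1}^{g} ξ_d·λ^d. Then for every λ with |λ| = 1 the number λ^{1−g}·det ξ(λ) is a nonnegative real number, and for every d ∈ {−1, …, g} the operator norm of the coefficient satisfies ‖ξ_d‖ ≤ sup_{|λ|=1} √(λ^{1−g}·det ξ(λ)). -/

import Mathlib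

/-!
On the unit circle the reality condition says `ξ(λ)ᴴ = -λ^{1-g} ξ(λ)`, so for a square root `μ` of
`λ^{1-g}` the matrix `μ ξ(λ)` is trace-free and skew-Hermitian. For such a `2 × 2` matrix `A`,
Cayley–Hamilton gives `Aᴴ A = -A² = det A • 1`; hence `det A ≥ 0` and `‖A‖² = det A`, i.e.
`‖ξ(λ)‖ = √(λ^{1-g} det ξ(λ))`. The coefficient `ξ_d` is the Cauchy integral
`(2πi)⁻¹ ∮ λ^{-d-1} ξ(λ) dλ` over the unit circle, whose norm is at most `sup_{|λ|=1} ‖ξ(λ)‖`.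
-/

open Complex Matrix
open scoped Matrix.Norms.L2Operator

/-- The Laurent polynomial `ξ(λ) = Σ_{d=-1}^{g} ξ_d λ^d` with matrix coefficients. -/
noncomputable def xiFun (g : ℕ) (ξ : ℤ → Matrix (Fin 2) (Fin 2) ℂ) (l : ℂ) :
    Matrix (Fin 2) (Fin 2) ℂ :=
  ∑ d ∈ Finset.Icc (-1 : ℤ) (g : ℤ), l ^ d • ξ d

open Metric Real
open scoped ComplexOrder

namespace Matrix

theorem mul_self_eq_neg_det_smul_one_of_trace_eq_zero {R : Type*} [CommRing R]
    {A : Matrix (Fin 2) (Fin 2) R} (hA : A.trace = 0) : A * A = -(A.det • 1) := by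
  have h11 : A 1 1 = -A 0 0 := by rw [trace_fin_two] at hA; linear_combination hA
  ext i j
  fin_cases i <;> fin_cases j <;> simp [mul_apply, det_fin_two, h11] <;> ring

section SkewHermitian

variable {A : Matrix (Fin 2) (Fin 2) ℂ}

theorem conjTranspose_mul_self_eq_det_smul_one (hA : Aᴴ = -A) (htr : A.trace = 0) :
    Aᴴ * A = A.det • 1 := by
  rw [hA, neg_mul, mul_self_eq_neg_det_smul_one_of_trace_eq_zero htr, neg_neg]

theorem det_nonneg_of_conjTranspose_eq_neg (hA : Aᴴ = -A) (htr : A.trace = 0) : 0 ≤ A.det := by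
  simpa [conjTranspose_mul_self_eq_det_smul_one hA htr] using
    (posSemidef_conjTranspose_mul_self A).diag_nonneg (i := 0)

theorem l2_opNorm_eq_sqrt_det_re (hA : Aᴴ = -A) (htr : A.trace = 0) : ‖A‖ = √A.det.re := by
  have h := l2_opNorm_conjTranspose_mul_self A
  rw [conjTranspose_mul_self_eq_det_smul_one hA htr, norm_smul, CStarRing.norm_one, mul_one,
    ← Complex.re_eq_norm.2 (det_nonneg_of_conjTranspose_eq_neg hA htr)] at h
  rw [h, Real.sqrt_mul_self (norm_nonneg A)]

end SkewHermitian

theorem exists_sq_eq_and_conjTranspose_smul_eq_neg {n : Type*} {X : Matrix n n ℂ} {c : ℂ}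
    (hc : ‖c‖ = 1) (hX : Xᴴ = -(c • X)) :
    ∃ μ : ℂ, ‖μ‖ = 1 ∧ μ ^ 2 = c ∧ (μ • X)ᴴ = -(μ • X) := by
  obtain ⟨μ, rfl⟩ := IsAlgClosed.exists_pow_nat_eq c two_pos
  have hμ : ‖μ‖ = 1 := by
    rwa [norm_pow, pow_eq_one_iff_of_nonneg (norm_nonneg μ) two_ne_zero] at hc
  refine ⟨μ, hμ, rfl, ?_⟩
  have hstar : star μ * μ ^ 2 = μ := by
    rw [pow_two, ← mul_assoc, RCLike.star_def, conj_mul', hμ, ofReal_one, one_pow, one_mul]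
  rw [conjTranspose_smul, hX, smul_neg, smul_smul, hstar]

section UnitMultipleSkewHermitian

variable {X : Matrix (Fin 2) (Fin 2) ℂ} {c : ℂ}

theorem mul_det_nonneg_of_conjTranspose_eq_neg_smul (hc : ‖c‖ = 1) (htr : X.trace = 0)
    (hX : Xᴴ = -(c • X)) : 0 ≤ c * X.det := by
  obtain ⟨μ, -, rfl, hA⟩ := exists_sq_eq_and_conjTranspose_smul_eq_neg hc hX
  simpa [det_smul] using det_nonneg_of_conjTranspose_eq_neg hA (by simp [htr])

theorem l2_opNorm_eq_sqrt_mul_det_re (hc : ‖c‖ = 1) (htr : X.trace = 0)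
    (hX : Xᴴ = -(c • X)) : ‖X‖ = √(c * X.det).re := by
  obtain ⟨μ, hμ, rfl, hA⟩ := exists_sq_eq_and_conjTranspose_smul_eq_neg hc hX
  have := l2_opNorm_eq_sqrt_det_re hA (by simp [htr])
  rwa [norm_smul, hμ, one_mul, det_smul, Fintype.card_fin] at this

end UnitMultipleSkewHermitian

end Matrix

section LaurentPolynomial

variable {E : Type*} [NormedAddCommGroup E] [NormedSpace ℂ E]

theorem norm_sum_zpow_smul_le (s : Finset ℤ) (c : ℤ → E) {z : ℂ} (hz : ‖z‖ = 1) :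
    ‖∑ e ∈ s, z ^ e • c e‖ ≤ ∑ e ∈ s, ‖c e‖ :=
  (norm_sum_le _ _).trans_eq <| Finset.sum_congr rfl fun e _ => by
    rw [norm_smul, norm_zpow, hz, _root_.one_zpow, one_mul]

variable [CompleteSpace E]

theorem circleIntegral_zpow_smul_sum_zpow_smul (s : Finset ℤ) (c : ℤ → E) {d : ℤ} (hd : d ∈ s) :
    ∮ z in C(0, 1), z ^ (-d - 1) • ∑ e ∈ s, z ^ e • c e = (2 * π * I) • c d := by
  have hsum : Set.EqOn (fun z : ℂ => z ^ (-d - 1) • ∑ e ∈ s, z ^ e • c e)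
      (fun z => ∑ e ∈ s, (z - 0) ^ (e - d - 1) • c e) (sphere 0 1) := fun z hz => by
    have hz0 : z ≠ 0 := ne_zero_of_mem_unit_sphere ⟨z, hz⟩
    simp only [Finset.smul_sum, smul_smul, ← zpow_add₀ hz0, sub_zero]
    congr! 3; ring
  rw [circleIntegral.integral_congr zero_le_one hsum, circleIntegral.integral_fun_sum
    fun e _ => (circleIntegrable_sub_zpow_iff.2 (by simp)).fun_smul_continuousOn continuousOn_const,
    Finset.sum_eq_single_of_mem d hd]
  · rw [circleIntegral.integral_smul_const]
    simpa using congrArg (· • c d) (circleIntegral.integral_sub_center_inv (0 : ℂ) one_ne_zero)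
  · intro e _ hne
    rw [circleIntegral.integral_smul_const, circleIntegral.integral_sub_zpow_of_ne (by omega),
      zero_smul]

theorem norm_le_of_forall_norm_sum_zpow_smul_le (s : Finset ℤ) (c : ℤ → E) {d : ℤ} (hd : d ∈ s)
    {M : ℝ} (hM : ∀ z ∈ sphere (0 : ℂ) 1, ‖∑ e ∈ s, z ^ e • c e‖ ≤ M) : ‖c d‖ ≤ M := by
  have hbound : ∀ z ∈ sphere (0 : ℂ) 1, ‖z ^ (-d - 1) • ∑ e ∈ s, z ^ e • c e‖ ≤ M := fun z hz => by
    rw [norm_smul, norm_zpow, mem_sphere_zero_iff_norm.1 hz, _root_.one_zpow, one_mul]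
    exact hM z hz
  have h2πI : (2 * π * I : ℂ) ≠ 0 := by simp [pi_ne_zero]
  have := circleIntegral.norm_two_pi_i_inv_smul_integral_le_of_norm_le_const zero_le_one hbound
  rwa [circleIntegral_zpow_smul_sum_zpow_smul s c hd, inv_smul_smul₀ h2πI, one_mul] at this

end LaurentPolynomial

section Potential

variable {g : ℕ} {ξ : ℤ → Matrix (Fin 2) (Fin 2) ℂ}

theorem trace_xiFun (htr : ∀ d : ℤ, -1 ≤ d → d ≤ (g : ℤ) → (ξ d).trace = 0) (l : ℂ) :
    (xiFun g ξ l).trace = 0 := by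
  rw [xiFun, trace_sum]
  refine Finset.sum_eq_zero fun d hd => ?_
  rw [Finset.mem_Icc] at hd
  rw [trace_smul, htr d hd.1 hd.2, smul_zero]

theorem conjTranspose_xiFun
    (hreal : ∀ d : ℤ, -1 ≤ d → d ≤ (g : ℤ) → ξ d = -((ξ ((g : ℤ) - 1 - d)).conjTranspose))
    {l : ℂ} (hl : ‖l‖ = 1) :
    (xiFun g ξ l)ᴴ = -(l ^ ((1 : ℤ) - g) • xiFun g ξ l) := by
  have hl0 : l ≠ 0 := norm_ne_zero_iff.1 (hl ▸ one_ne_zero)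
  rw [xiFun, conjTranspose_sum, Finset.smul_sum, ← Finset.sum_neg_distrib]
  refine Finset.sum_nbij' (fun d => (g : ℤ) - 1 - d) (fun d => (g : ℤ) - 1 - d)
    (fun d hd => ?_) (fun d hd => ?_) (fun d _ => by ring) (fun d _ => by ring) fun d hd => ?_
  · simp only [Finset.mem_Icc] at hd ⊢; omega
  · simp only [Finset.mem_Icc] at hd ⊢; omega
  · rw [Finset.mem_Icc] at hd
    rw [conjTranspose_smul, hreal d hd.1 hd.2, conjTranspose_neg, conjTranspose_conjTranspose,
      star_zpow₀, RCLike.star_def, ← inv_eq_conj hl, _root_.inv_zpow', smul_smul, ← zpow_add₀ hl0,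
      smul_neg, show (1 : ℤ) - g + (g - 1 - d) = -d by ring]

theorem zpow_mul_det_xiFun_nonneg (htr : ∀ d : ℤ, -1 ≤ d → d ≤ (g : ℤ) → (ξ d).trace = 0)
    (hreal : ∀ d : ℤ, -1 ≤ d → d ≤ (g : ℤ) → ξ d = -((ξ ((g : ℤ) - 1 - d)).conjTranspose))
    {l : ℂ} (hl : ‖l‖ = 1) : 0 ≤ l ^ ((1 : ℤ) - g) * (xiFun g ξ l).det :=
  mul_det_nonneg_of_conjTranspose_eq_neg_smul (by rw [norm_zpow, hl, _root_.one_zpow])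
    (trace_xiFun htr l) (conjTranspose_xiFun hreal hl)

theorem norm_xiFun_eq_sqrt (htr : ∀ d : ℤ, -1 ≤ d → d ≤ (g : ℤ) → (ξ d).trace = 0)
    (hreal : ∀ d : ℤ, -1 ≤ d → d ≤ (g : ℤ) → ξ d = -((ξ ((g : ℤ) - 1 - d)).conjTranspose))
    {l : ℂ} (hl : ‖l‖ = 1) : ‖xiFun g ξ l‖ = √(l ^ ((1 : ℤ) - g) * (xiFun g ξ l).det).re :=
  l2_opNorm_eq_sqrt_mul_det_re (by rw [norm_zpow, hl, _root_.one_zpow])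
    (trace_xiFun htr l) (conjTranspose_xiFun hreal hl)

end Potential

theorem potential_coefficient_bound_general (g : ℕ) (ξ : ℤ → Matrix (Fin 2) (Fin 2) ℂ)
    (htr : ∀ d : ℤ, -1 ≤ d → d ≤ (g : ℤ) → (ξ d).trace = 0)
    (hreal : ∀ d : ℤ, -1 ≤ d → d ≤ (g : ℤ) →
      ξ d = -((ξ ((g : ℤ) - 1 - d)).conjTranspose)) :
    (∀ l : ℂ, ‖l‖ = 1 →
        ∃ r : ℝ, 0 ≤ r ∧ l ^ ((1 : ℤ) - (g : ℤ)) * (xiFun g ξ l).det = (r : ℂ)) ∧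
    (∀ d : ℤ, -1 ≤ d → d ≤ (g : ℤ) →
        ‖ξ d‖ ≤ ⨆ l : Metric.sphere (0 : ℂ) 1,
          Real.sqrt (((l : ℂ) ^ ((1 : ℤ) - (g : ℤ)) * (xiFun g ξ (l : ℂ)).det).re)) := by
  refine ⟨fun l hl => ?_, fun d hd₁ hd₂ => ?_⟩
  · have h := zpow_mul_det_xiFun_nonneg htr hreal hl
    exact ⟨_, (nonneg_iff.1 h).1, eq_re_of_ofReal_le (by rwa [ofReal_zero])⟩
  · have hnorm (l : sphere (0 : ℂ) 1) :=
      norm_xiFun_eq_sqrt htr hreal (mem_sphere_zero_iff_norm.1 l.2)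
    have hbdd : BddAbove (Set.range fun l : sphere (0 : ℂ) 1 =>
        √((l : ℂ) ^ ((1 : ℤ) - g) * (xiFun g ξ l).det).re) :=
      ⟨_, Set.forall_mem_range.2 fun l => (hnorm l).symm.trans_le <|
        norm_sum_zpow_smul_le _ ξ (mem_sphere_zero_iff_norm.1 l.2)⟩
    exact norm_le_of_forall_norm_sum_zpow_smul_le _ ξ (Finset.mem_Icc.2 ⟨hd₁, hd₂⟩)
      fun l hl => (hnorm ⟨l, hl⟩).trans_le (le_ciSup hbdd ⟨l, hl⟩)

/-- For a potential `ξ` of genus `g`, the number `λ^{1-g} det ξ(λ)` is a nonnegative real for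
every unimodular `λ`, and the operator norm of every coefficient `ξ_d` is bounded by
`sup_{|λ|=1} √(λ^{1-g} det ξ(λ))`. -/
theorem potential_coefficient_bound (g : ℕ) (ξ : ℤ → Matrix (Fin 2) (Fin 2) ℂ)
    (htr : ∀ d : ℤ, -1 ≤ d → d ≤ (g : ℤ) → (ξ d).trace = 0)
    (hE : ∃ c : ℂ, ξ (-1) = c • (!![0, 1; 0, 0] : Matrix (Fin 2) (Fin 2) ℂ))
    (hreal : ∀ d : ℤ, -1 ≤ d → d ≤ (g : ℤ) →
      ξ d = -((ξ ((g : ℤ) - 1 - d)).conjTranspose)) :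
    (∀ l : ℂ, ‖l‖ = 1 →
        ∃ r : ℝ, 0 ≤ r ∧ l ^ ((1 : ℤ) - (g : ℤ)) * (xiFun g ξ l).det = (r : ℂ)) ∧
    (∀ d : ℤ, -1 ≤ d → d ≤ (g : ℤ) →
        ‖ξ d‖ ≤ ⨆ l : Metric.sphere (0 : ℂ) 1,
          Real.sqrt (((l : ℂ) ^ ((1 : ℤ) - (g : ℤ)) * (xiFun g ξ (l : ℂ)).det).re)) :=
  potential_coefficient_bound_general g ξ htr hreal
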